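/- Every realizer r has a finite sound zero: there exists a finite sound state t ∈ 𝒮 with r(t) = ∅. -/

import Mathlib

variable {A : Type*}

/-- A knowledge state: meets each equivalence class in an empty or singleton set. -/
def IsState (r : A → A → Prop) (X : Set A) : Prop :=
  ∀ x : A, X ∩ {y | r y x} = ∅ ∨ ∃ a, X ∩ {y | r y x} = {a}

/-- The set of knowledge states. -/
def States (r : A → A → Prop) := {X : Set A // IsState r X}

/-- Subbasic positive-information set. -/
def Aset (r : A → A → Prop) (x : A) : Set (States r) := {X | x ∈ X.1}

/-- Subbasic negative-information set. -/
def Bset (r : A → A → Prop) (x : A) : Set (States r) := {X | X.1 ∩ {y | r y x} = ∅}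

/-- The state topology. -/
def stateTop (r : A → A → Prop) : TopologicalSpace (States r) :=
  .generateFrom (Set.range (Aset r) ∪ Set.range (Bset r))

theorem isState_mono {r : A → A → Prop} {X Y : Set A} (hX : IsState r X) (hYX : Y ⊆ X) :
    IsState r Y := by
  intro x
  rcases hX x with h0 | ⟨a, ha⟩
  · left
    apply Set.eq_empty_of_subset_empty
    rw [← h0]
    exact Set.inter_subset_inter_left _ hYX
  · have h : Y ∩ {y | r y x} ⊆ {a} := ha ▸ Set.inter_subset_inter_left _ hYX
    rcases Set.subset_singleton_iff_eq.mp h with h | h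
    · exact Or.inl h
    · exact Or.inr ⟨a, h⟩

/-- Restriction of a knowledge state to answers of level below `α`. -/
def restrict (r : A → A → Prop) (lev : A → Ordinal) (α : Ordinal) (X : States r) : States r :=
  ⟨{y ∈ X.1 | lev y < α}, isState_mono X.2 (Set.sep_subset _ _)⟩

/-!
Build a model by recursion on the level: `x` enters when `tr x` holds at the part of the model
below its level and `x` is the least such element of its class for a fixed well-order of `A`.
Layering makes this model sound, and it is complete, so the realizer `R` has nothing to offer
there: `R` vanishes at the model. Being continuous, `R` then vanishes on every substate of the
model that contains a certain finite part `F` of it; likewise each `tr x` is forced by a finite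
part of the model below the level of `x`. Closing `F` under these witnesses stops after finitely
many steps since levels are well-founded, and yields a finite sound substate of the model at
which `R` vanishes.
-/

section Closure

variable {α : Type*} {W : α → Set α}

theorem closed_biUnion {ι : Type*} {F : Set ι} {t : ι → Set α}
    (ht : ∀ i ∈ F, ∀ x ∈ t i, W x ⊆ t i) : ∀ x ∈ ⋃ i ∈ F, t i, W x ⊆ ⋃ i ∈ F, t i := by
  intro x hx
  obtain ⟨i, hi, hxi⟩ := Set.mem_iUnion₂.mp hx
  exact (ht i hi x hxi).trans (Set.subset_biUnion_of_mem hi)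

theorem exists_finite_closed_between {s : α → α → Prop} (hs : WellFounded s)
    (hWfin : ∀ x, (W x).Finite) (hWs : ∀ x, ∀ y ∈ W x, s y x) {M : Set α}
    (hWM : ∀ x ∈ M, W x ⊆ M) {F : Set α} (hF : F.Finite) (hFM : F ⊆ M) :
    ∃ t : Set α, t.Finite ∧ F ⊆ t ∧ t ⊆ M ∧ ∀ x ∈ t, W x ⊆ t := by
  have single : ∀ x ∈ M, ∃ t : Set α, t.Finite ∧ x ∈ t ∧ t ⊆ M ∧ ∀ z ∈ t, W z ⊆ t := by
    intro x
    induction x using hs.induction with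
    | _ x ih =>
    intro hx
    choose! t htfin hyt htM htW using fun y hy => ih y (hWs x y hy) (hWM x hx hy)
    refine ⟨insert x (⋃ y ∈ W x, t y), ((hWfin x).biUnion htfin).insert x,
      Set.mem_insert x _, Set.insert_subset hx (Set.iUnion₂_subset htM), ?_⟩
    rintro z (rfl | hz)
    · exact fun y hy => Set.mem_insert_of_mem _ (Set.mem_biUnion hy (hyt y hy))
    · exact (closed_biUnion htW z hz).trans (Set.subset_insert _ _)
  choose! t htfin hxt htM htW using fun x hx => single x (hFM hx)
  exact ⟨⋃ x ∈ F, t x, hF.biUnion htfin, fun x hx => Set.mem_biUnion hx (hxt x hx),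
    Set.iUnion₂_subset htM, closed_biUnion htW⟩

end Closure

section Topology

variable {r : A → A → Prop}

theorem isState_singleton (a : A) : IsState r {a} := fun _ =>
  Set.Subsingleton.eq_empty_or_singleton (Set.subsingleton_singleton.anti Set.inter_subset_left)

theorem Aset_injective : Function.Injective (Aset r) := fun a b h => by
  have ha : (⟨{a}, isState_singleton a⟩ : States r) ∈ Aset r b := h ▸ rfl
  exact (Set.mem_singleton_iff.mp ha).symm

theorem exists_finite_eq_of_subset {β : Type*} {f : States r → β}
    (hf : @Continuous _ _ (stateTop r) ⊥ f) (X : States r) :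
    ∃ F : Set A, F.Finite ∧ F ⊆ X.1 ∧ ∀ Y : States r, F ⊆ Y.1 → Y.1 ⊆ X.1 → f Y = f X := by
  let _ := stateTop r
  let _ : TopologicalSpace β := ⊥
  have : DiscreteTopology β := ⟨rfl⟩
  have hbasis := TopologicalSpace.isTopologicalBasis_of_subbasis
    (s := Set.range (Aset r) ∪ Set.range (Bset r)) rfl
  obtain ⟨_, ⟨S, ⟨hSfin, hSsub⟩, rfl⟩, hXS, hSU⟩ := hbasis.exists_subset_of_mem_open
    (rfl : X ∈ f ⁻¹' {f X}) ((isOpen_discrete {f X}).preimage hf)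
  refine ⟨Aset r ⁻¹' S, hSfin.preimage Aset_injective.injOn, fun a ha => hXS _ ha,
    fun Y hFY hYX => hSU fun U hU => ?_⟩
  rcases hSsub hU with ⟨a, rfl⟩ | ⟨b, rfl⟩
  · exact hFY hU
  · exact Set.subset_empty_iff.mp ((hXS _ hU : X.1 ∩ _ = ∅) ▸ Set.inter_subset_inter_left _ hYX)

end Topology

section Soundness

variable {r : A → A → Prop}

def States.IsSound (X : States r) (tr : A → States r → Bool) : Prop :=
  ∀ x ∈ X.1, tr x X = true

def States.IsComplete (X : States r) (tr : A → States r → Bool) : Prop :=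
  ∀ x, tr x X = true → ∃ z ∈ X.1, r z x

variable {lev : A → Ordinal} {tr : A → States r → Bool}

theorem States.IsSound.exists_finite_isSound_between
    (hcont : ∀ x : A, @Continuous _ _ (stateTop r) ⊥ (tr x))
    (hlayer : ∀ (x : A) (X : States r), tr x X = tr x (restrict r lev (lev x) X))
    {M : States r} (hM : M.IsSound tr) {F : Set A} (hF : F.Finite) (hFM : F ⊆ M.1) :
    ∃ t : States r, t.1.Finite ∧ F ⊆ t.1 ∧ t.1 ⊆ M.1 ∧ t.IsSound tr := by
  -- `W x` is a finite part of `M` below the level of `x` that already forces `tr x`.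
  choose W hWfin hWM hW using fun x =>
    exists_finite_eq_of_subset (hcont x) (restrict r lev (lev x) M)
  obtain ⟨t, htfin, hFt, htM, htW⟩ := exists_finite_closed_between (InvImage.wf lev Ordinal.lt_wf)
    hWfin (fun x y hy => (hWM x hy).2) (fun x _ => (hWM x).trans (Set.sep_subset _ _)) hF hFM
  refine ⟨⟨t, isState_mono M.2 htM⟩, htfin, hFt, htM, fun x hx => ?_⟩
  calc tr x ⟨t, _⟩ = tr x (restrict r lev (lev x) ⟨t, _⟩) := hlayer x _
    _ = tr x (restrict r lev (lev x) M) :=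
      hW x _ (fun y hy => ⟨htW x hx hy, (hWM x hy).2⟩) fun y hy => ⟨htM hy.1, hy.2⟩
    _ = true := (hlayer x M).symm.trans (hM x (htM hx))

end Soundness

section Model

variable (r : A → A → Prop) (lev : A → Ordinal) (tr : A → States r → Bool)

/-- Recursion on the level: `x` is in the model iff `tr x` holds at the part of the model below
the level of `x` and `x` is the `WellOrderingRel`-least element of its class with this property. -/
noncomputable def InModel : A → Prop :=
  (InvImage.wf lev Ordinal.lt_wf).fix fun x ih =>
    ∃ hS : IsState r {y | ∃ h : lev y < lev x, ih y h},
      tr x ⟨_, hS⟩ = true ∧ ∀ z, r z x → tr z ⟨_, hS⟩ = true → ¬ WellOrderingRel z x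

def modelBelow (α : Ordinal) : Set A := {y | ∃ _ : lev y < α, InModel r lev tr y}

theorem inModel_iff (x : A) :
    InModel r lev tr x ↔ ∃ hS : IsState r (modelBelow r lev tr (lev x)),
      tr x ⟨_, hS⟩ = true ∧ ∀ z, r z x → tr z ⟨_, hS⟩ = true → ¬ WellOrderingRel z x := by
  rw [InModel, WellFounded.fix_eq]
  rfl

variable {r lev tr} (hr : Equivalence r) (hlev : ∀ x y : A, r x y → lev x = lev y)

include hr hlev in
theorem InModel.eq_of_rel {y₁ y₂ : A} (h₁ : InModel r lev tr y₁) (h₂ : InModel r lev tr y₂)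
    (h12 : r y₁ y₂) : y₁ = y₂ := by
  obtain ⟨hS₁, ht₁, hmin₁⟩ := (inModel_iff r lev tr y₁).mp h₁
  obtain ⟨hS₂, ht₂, hmin₂⟩ := (inModel_iff r lev tr y₂).mp h₂
  have hS : (⟨_, hS₁⟩ : States r) = ⟨_, hS₂⟩ :=
    Subtype.ext (congrArg (modelBelow r lev tr) (hlev _ _ h12))
  have h21 : ¬ WellOrderingRel y₂ y₁ := hmin₁ y₂ (hr.symm h12) (hS ▸ ht₂)
  have h12' : ¬ WellOrderingRel y₁ y₂ := hmin₂ y₁ h12 (hS ▸ ht₁)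
  exact ((trichotomous_of WellOrderingRel y₁ y₂).resolve_left h12').resolve_right h21

include hr hlev in
theorem isState_setOf_inModel : IsState r {x | InModel r lev tr x} := fun _ =>
  Set.Subsingleton.eq_empty_or_singleton fun _ ⟨hy₁, hx₁⟩ _ ⟨hy₂, hx₂⟩ =>
    hy₁.eq_of_rel hr hlev hy₂ (hr.trans hx₁ (hr.symm hx₂))

variable (tr) in
def model : States r := ⟨{x | InModel r lev tr x}, isState_setOf_inModel hr hlev⟩

theorem val_restrict_model (α : Ordinal) :
    (restrict r lev α (model tr hr hlev)).1 = modelBelow r lev tr α := by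
  ext y
  simp only [restrict, model, modelBelow, exists_prop]
  exact and_comm

theorem mem_model_iff (x : A) : x ∈ (model tr hr hlev).1 ↔
    tr x (restrict r lev (lev x) (model tr hr hlev)) = true ∧
      ∀ z, r z x → tr z (restrict r lev (lev x) (model tr hr hlev)) = true →
        ¬ WellOrderingRel z x := by
  have hrestrict : ∀ hS, (⟨modelBelow r lev tr (lev x), hS⟩ : States r) =
      restrict r lev (lev x) (model tr hr hlev) :=
    fun _ => Subtype.ext (val_restrict_model hr hlev _).symm
  change InModel r lev tr x ↔ _
  rw [inModel_iff]
  constructor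
  · rintro ⟨_, h⟩
    rwa [hrestrict] at h
  · intro h
    exact ⟨val_restrict_model hr hlev (lev x) ▸ (restrict r lev (lev x) (model tr hr hlev)).2,
      by rwa [hrestrict]⟩

variable (hlayer : ∀ (x : A) (X : States r), tr x X = tr x (restrict r lev (lev x) X))
include hlayer

theorem model_isSound : (model tr hr hlev).IsSound tr := fun x hx =>
  (hlayer x _).trans ((mem_model_iff hr hlev x).mp hx).1

theorem model_isComplete : (model tr hr hlev).IsComplete tr := by
  intro x hx
  set S := restrict r lev (lev x) (model tr hr hlev)
  let T : Set A := {z | r z x ∧ tr z S = true}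
  have hxT : x ∈ T := ⟨hr.refl x, (hlayer x _).symm.trans hx⟩
  let z₀ := WellOrderingRel.isWellOrder.wf.min T ⟨x, hxT⟩
  have hz₀T : z₀ ∈ T := WellFounded.min_mem _ _ _
  have hS : restrict r lev (lev z₀) (model tr hr hlev) = S := by rw [hlev _ _ hz₀T.1]
  refine ⟨z₀, (mem_model_iff hr hlev z₀).mpr ⟨hS ▸ hz₀T.2, fun z hz hzS => ?_⟩, hz₀T.1⟩
  exact WellOrderingRel.isWellOrder.wf.not_lt_min T ⟨hr.trans hz hz₀T.1, hS ▸ hzS⟩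

end Model

theorem realizer_eq_empty_of_isComplete {r : A → A → Prop} {tr : A → States r → Bool}
    {R : States r → Finset A}
    (hR : ∀ (X : States r), ∀ x ∈ R X, X.1 ∩ {y | r y x} = ∅ ∧ tr x X = true)
    {M : States r} (hM : M.IsComplete tr) : R M = ∅ :=
  Finset.eq_empty_of_forall_notMem fun x hx => by
    obtain ⟨hdisj, htr⟩ := hR M x hx
    obtain ⟨z, hzM, hzx⟩ := hM x htr
    exact hdisj.subset ⟨hzM, hzx⟩

theorem realizer_has_finite_sound_zero_general (r : A → A → Prop) (hr : Equivalence r)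
    (lev : A → Ordinal) (hlev : ∀ x y : A, r x y → lev x = lev y)
    (tr : A → States r → Bool)
    (hcont : ∀ x : A, @Continuous _ _ (stateTop r) ⊥ (tr x))
    (hlayer : ∀ (x : A) (X : States r), tr x X = tr x (restrict r lev (lev x) X))
    (R : States r → Finset A)
    (hRcont : @Continuous _ _ (stateTop r) ⊥ R)
    (hR : ∀ (X : States r), ∀ x ∈ R X, X.1 ∩ {y | r y x} = ∅ ∧ tr x X = true) :
    ∃ t : States r, t.1.Finite ∧ (∀ x ∈ t.1, tr x t = true) ∧ R t = ∅ := by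
  obtain ⟨F, hFfin, hFM, hF⟩ := exists_finite_eq_of_subset hRcont (model tr hr hlev)
  obtain ⟨t, htfin, hFt, htM, ht⟩ :=
    (model_isSound hr hlev hlayer).exists_finite_isSound_between hcont hlayer hFfin hFM
  exact ⟨t, htfin, ht,
    (hF t hFt htM).trans (realizer_eq_empty_of_isComplete hR (model_isComplete hr hlev hlayer))⟩

theorem realizer_has_finite_sound_zero (r : A → A → Prop) [Countable A] (hr : Equivalence r)
    (lev : A → Ordinal) (hlev : ∀ x y : A, r x y → lev x = lev y)
    (tr : A → States r → Bool)
    (hcont : ∀ x : A, @Continuous _ _ (stateTop r) ⊥ (tr x))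
    (hlayer : ∀ (x : A) (X : States r), tr x X = tr x (restrict r lev (lev x) X))
    (R : States r → Finset A)
    (hRcont : @Continuous _ _ (stateTop r) ⊥ R)
    (hR : ∀ (X : States r), ∀ x ∈ R X, X.1 ∩ {y | r y x} = ∅ ∧ tr x X = true) :
    ∃ t : States r, t.1.Finite ∧ (∀ x ∈ t.1, tr x t = true) ∧ R t = ∅ :=
  realizer_has_finite_sound_zero_general r hr lev hlev tr hcont hlayer R hRcont hR
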